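/- Suppose a preference profile satisfies MaxProp, w_n is the woman who is every man's last preference, and man m_n is matched to w_n by the men-proposing DA. Then for each woman w_i with i in {1,...,n-1}, the top preference of w_i is some man m_j with j != n, and w_i is the second-to-last (penultimate) preference of that man m_j. -/

import Mathlib

open scoped Classical

noncomputable section

/-- A two-sided matching market with `n` men and `n` women, each with a complete
strict preference order over the other side. `mpref m k` is man `m`'s `k`-th
favourite woman (0 = top), and `wpref w k` is woman `w`'s `k`-th favourite man. -/
structure Profile (n : ℕ) where
  mpref : Fin n → (Fin n ≃ Fin n)
  wpref : Fin n → (Fin n ≃ Fin n)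

namespace Profile

variable {n : ℕ}

/-- rank (0 = best) of woman `w` in man `m`'s preference list -/
def mrank (P : Profile n) (m w : Fin n) : ℕ := ((P.mpref m).symm w : ℕ)

/-- rank (0 = best) of man `m` in woman `w`'s preference list -/
def wrank (P : Profile n) (w m : Fin n) : ℕ := ((P.wpref w).symm m : ℕ)

/-- man `m` strictly prefers woman `w` to woman `w'` -/
def mPrefers (P : Profile n) (m w w' : Fin n) : Prop := P.mrank m w < P.mrank m w'

/-- woman `w` strictly prefers man `m` to man `m'` -/
def wPrefers (P : Profile n) (w m m' : Fin n) : Prop := P.wrank w m < P.wrank w m'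

/-- top choice of man `m` -/
def topM (P : Profile n) (m : Fin n) : Fin n := P.mpref m ⟨0, m.pos⟩

/-- top choice of woman `w` -/
def topW (P : Profile n) (w : Fin n) : Fin n := P.wpref w ⟨0, w.pos⟩

/-- the profile with the roles of men and women exchanged -/
def swap (P : Profile n) : Profile n := ⟨P.wpref, P.mpref⟩

/-- State of the men-proposing deferred acceptance algorithm:
`next m` = number of proposals man `m` has made so far,
`held w` = the man woman `w` currently tentatively holds (if any). -/
structure DAState (n : ℕ) where
  next : Fin n → ℕ
  held : Fin n → Option (Fin n)

def initState (n : ℕ) : DAState n := ⟨fun _ => 0, fun _ => none⟩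

/-- the men currently unmatched (held by no woman) -/
def unmatched (s : DAState n) : Finset (Fin n) :=
  Finset.univ.filter fun m => ∀ w : Fin n, s.held w ≠ some m

/-- the woman man `m` proposes to next: his most preferred woman among those
who have not rejected him yet -/
def target (P : Profile n) (s : DAState n) (m : Fin n) : Fin n :=
  P.mpref m ⟨s.next m % n, Nat.mod_lt _ m.pos⟩

/-- the men proposing to woman `w` in the current round -/
def proposers (P : Profile n) (s : DAState n) (w : Fin n) : Finset (Fin n) :=
  (unmatched s).filter fun m => target P s m = w

/-- one round of the men-proposing deferred acceptance algorithm: every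
unmatched man proposes to his favourite woman who has not rejected him yet,
and every woman tentatively holds her favourite among her current partner
and the new proposers, rejecting the rest -/
def step (P : Profile n) (s : DAState n) : DAState n where
  next := fun m => if m ∈ unmatched s then s.next m + 1 else s.next m
  held := fun w => ((proposers P s w ∪ (s.held w).toFinset).toList).argmin (P.wrank w)

/-- the state after `k` rounds of men-proposing deferred acceptance -/
def stateAt (P : Profile n) (k : ℕ) : DAState n := (step P)^[k] (initState n)

/-- the final state of men-proposing deferred acceptance
(`n * n + 1` iterations is always enough to reach the fixed point) -/
def finalState (P : Profile n) : DAState n := stateAt P (n * n + 1)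

/-- total number of proposals made during the men-proposing DA -/
def totalProposals (P : Profile n) : ℕ := ∑ m : Fin n, (finalState P).next m

/-- number of rounds of the men-proposing DA (rounds in which some proposal is made) -/
def rounds (P : Profile n) : ℕ :=
  ((Finset.range (n * n + 1)).filter fun k => (unmatched (stateAt P k)).Nonempty).card

/-- total number of proposals received by woman `w` during the men-proposing DA -/
def proposalsTo (P : Profile n) (w : Fin n) : ℕ :=
  ∑ k ∈ Finset.range (n * n + 1), (proposers P (stateAt P k) w).card

/-- man `m` proposes to woman `w` at some point during the men-proposing DA -/
def proposedTo (P : Profile n) (m w : Fin n) : Prop :=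
  ∃ k < n * n + 1, m ∈ proposers P (stateAt P k) w

/-- the men-proposing DA makes the maximum possible number `n² - n + 1` of proposals -/
def MaxProp (P : Profile n) : Prop := P.totalProposals = n * n + 1 - n

/-- the men-proposing DA takes the maximum possible number `n² - 2n + 2` of rounds -/
def MaxRou (P : Profile n) : Prop := P.rounds = n * n + 2 - 2 * n

/-- a matching (a bijection man ↦ woman) is stable iff no man-woman pair mutually
prefer each other to their assigned partners -/
def Stable (P : Profile n) (μ : Fin n ≃ Fin n) : Prop :=
  ¬ ∃ (m w : Fin n), P.mPrefers m w (μ m) ∧ P.wPrefers w m (μ.symm w)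

/-- the profile admits a unique stable matching -/
def USM (P : Profile n) : Prop := ∃! μ : Fin n ≃ Fin n, P.Stable μ

/-- the sequential preference condition of Eeckhout (2000) -/
def SPC (P : Profile n) : Prop :=
  ∃ σ τ : Equiv.Perm (Fin n), ∀ i j : Fin n, i < j →
    P.mPrefers (σ i) (τ i) (τ j) ∧ P.wPrefers (τ i) (σ i) (σ j)

/-- the no crossing condition of Clark (2006) -/
def NCC (P : Profile n) : Prop :=
  ∃ σ τ : Equiv.Perm (Fin n), ∀ i j k l : Fin n, i < j → k < l →
    (P.mPrefers (σ i) (τ l) (τ k) → P.mPrefers (σ j) (τ l) (τ k)) ∧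
    (P.wPrefers (τ k) (σ j) (σ i) → P.wPrefers (τ l) (σ j) (σ i))

end Profile

/-! A man's proposals go down his list, so he has proposed to `w` iff his proposal counter
exceeds his rank of `w`; summing over women recovers the total number of proposals. Only `mn`
ever reaches `wn`, the bottom of every list, so the remaining `n² - n` proposals make every man
propose to every other woman. Such a woman then holds her favourite man, who is not `mn` (he
holds `wn`) and who, having proposed to everyone but `wn`, stopped at rank `n - 2`. -/

namespace Profile

open Finset

variable {n : ℕ} {P : Profile n}

lemma mrank_inj {m w w' : Fin n} : P.mrank m w = P.mrank m w' ↔ w = w' := by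
  simp [mrank, Fin.val_inj]

lemma wrank_eq_zero_iff {w m : Fin n} : P.wrank w m = 0 ↔ m = P.topW w := by
  rw [wrank, topW, ← Equiv.symm_apply_eq, Fin.ext_iff]

lemma card_filter_mrank_lt (P : Profile n) (m : Fin n) (t : ℕ) :
    #{w | P.mrank m w < t} = min n t :=
  (card_equiv (P.mpref m).symm fun _ => by simp only [mem_filter, mem_univ, true_and]; rfl).trans
    Fin.card_filter_val_lt

lemma sub_one_le_of_forall_ne_mrank_lt {m wn : Fin n} {t : ℕ}
    (h : ∀ w, w ≠ wn → P.mrank m w < t) : n - 1 ≤ t := by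
  have hsub : univ.erase wn ⊆ ({w | P.mrank m w < t} : Finset (Fin n)) := fun w hw =>
    mem_filter.2 ⟨mem_univ w, h w (ne_of_mem_erase hw)⟩
  have := card_le_card hsub
  rw [card_erase_of_mem (mem_univ wn), card_univ, Fintype.card_fin,
    card_filter_mrank_lt] at this
  omega

lemma mrank_eq_sub_one_of_forall_mPrefers {m wn : Fin n}
    (h : ∀ w, w ≠ wn → P.mPrefers m w wn) : P.mrank m wn = n - 1 := by
  have hlt : P.mrank m wn < n := ((P.mpref m).symm wn).isLt
  have := sub_one_le_of_forall_ne_mrank_lt h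
  omega

lemma mem_unmatched {s : DAState n} {m : Fin n} :
    m ∈ unmatched s ↔ ∀ w, s.held w ≠ some m := by
  simp [unmatched]

lemma mem_proposers {s : DAState n} {m w : Fin n} :
    m ∈ proposers P s w ↔ m ∈ unmatched s ∧ target P s m = w := by
  simp [proposers]

lemma step_next (s : DAState n) (m : Fin n) :
    (step P s).next m = if m ∈ unmatched s then s.next m + 1 else s.next m := rfl

lemma step_held_le {s : DAState n} {w m : Fin n}
    (h : m ∈ proposers P s w ∪ (s.held w).toFinset) :
    ∃ m', (step P s).held w = some m' ∧ P.wrank w m' ≤ P.wrank w m := by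
  cases hl : ((proposers P s w ∪ (s.held w).toFinset).toList).argmin (P.wrank w) with
  | none => simp_all [step]
  | some m' => exact ⟨m', hl, List.le_of_mem_argmin (mem_toList.2 h) hl⟩

lemma step_held_cases {s : DAState n} {w m : Fin n} (h : (step P s).held w = some m) :
    m ∈ proposers P s w ∨ s.held w = some m := by
  simpa using List.argmin_mem (f := P.wrank w) h

/-- `P.mrank m w < s.next m` says that `m` has proposed to `w` by state `s`. -/
structure DAInvariant (P : Profile n) (s : DAState n) : Prop where
  held_injective : ∀ {m w w'}, s.held w = some m → s.held w' = some m → w = w'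
  next_eq_of_held : ∀ {m w}, s.held w = some m → s.next m = P.mrank m w + 1
  held_le_of_proposed : ∀ {w m}, P.mrank m w < s.next m →
    ∃ m', s.held w = some m' ∧ P.wrank w m' ≤ P.wrank w m

namespace DAInvariant

variable {s : DAState n}

/-- An unmatched man who had exhausted his list would have proposed to all `n` women, who
would then all hold distinct men, leaving no one unmatched. -/
lemma next_lt_of_mem_unmatched (hI : DAInvariant P s) {m : Fin n} (hm : m ∈ unmatched s) :
    s.next m < n := by
  by_contra! hge
  have hall : ∀ w, ∃ m', s.held w = some m' := fun w =>
    (hI.held_le_of_proposed (((P.mpref m).symm w).isLt.trans_le hge)).imp fun _ h => h.1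
  choose f hf using hall
  have hf_inj : Function.Injective f := fun w w' hww' =>
    hI.held_injective (hf w) (hww' ▸ hf w')
  obtain ⟨w, rfl⟩ := (Finite.surjective_of_injective hf_inj) m
  exact mem_unmatched.1 hm w (hf w)

lemma next_le (hI : DAInvariant P s) (m : Fin n) : s.next m ≤ n := by
  by_cases hm : m ∈ unmatched s
  · exact (hI.next_lt_of_mem_unmatched hm).le
  · obtain ⟨w, hw⟩ := by simpa [mem_unmatched] using hm
    rw [hI.next_eq_of_held hw]
    exact ((P.mpref m).symm w).isLt

lemma mem_proposers_iff (hI : DAInvariant P s) {m w : Fin n} (hm : m ∈ unmatched s) :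
    m ∈ proposers P s w ↔ P.mrank m w = s.next m := by
  have hlt := hI.next_lt_of_mem_unmatched hm
  have htarget : target P s m = P.mpref m ⟨s.next m, hlt⟩ := by
    simp [target, Nat.mod_eq_of_lt hlt]
  rw [mem_proposers, htarget, mrank, ← Equiv.eq_symm_apply, Fin.ext_iff, eq_comm]
  simp [hm]

lemma step (hI : DAInvariant P s) : DAInvariant P (step P s) where
  held_injective {m w w'} hw hw' := by
    rcases step_held_cases hw with hp | hp <;> rcases step_held_cases hw' with hp' | hp'
    · exact (mem_proposers.1 hp).2.symm.trans (mem_proposers.1 hp').2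
    · exact absurd hp' (mem_unmatched.1 (mem_proposers.1 hp).1 w')
    · exact absurd hp (mem_unmatched.1 (mem_proposers.1 hp').1 w)
    · exact hI.held_injective hp hp'
  next_eq_of_held {m w} hw := by
    rcases step_held_cases hw with hp | hp
    · have hu := (mem_proposers.1 hp).1
      rw [step_next, if_pos hu, ← (hI.mem_proposers_iff hu).1 hp]
    · have hu : m ∉ unmatched s := fun hu => mem_unmatched.1 hu w hp
      rw [step_next, if_neg hu, hI.next_eq_of_held hp]
  held_le_of_proposed {w m} hlt := by
    suffices ∃ m' ∈ proposers P s w ∪ (s.held w).toFinset, P.wrank w m' ≤ P.wrank w m by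
      obtain ⟨m', hm', hle⟩ := this
      obtain ⟨m'', hm'', hle'⟩ := step_held_le hm'
      exact ⟨m'', hm'', hle'.trans hle⟩
    have held_case : P.mrank m w < s.next m →
        ∃ m' ∈ proposers P s w ∪ (s.held w).toFinset, P.wrank w m' ≤ P.wrank w m := by
      intro h
      obtain ⟨m', hm', hle⟩ := hI.held_le_of_proposed h
      exact ⟨m', mem_union_right _ (by simpa using hm'), hle⟩
    rw [step_next] at hlt
    split_ifs at hlt with hu
    · rcases (Nat.lt_succ_iff.1 hlt).lt_or_eq with h | h
      · exact held_case h
      · exact ⟨m, mem_union_left _ ((hI.mem_proposers_iff hu).2 h), le_rfl⟩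
    · exact held_case hlt

end DAInvariant

lemma daInvariant_stateAt (P : Profile n) : ∀ k, DAInvariant P (stateAt P k)
  | 0 => ⟨by simp [stateAt, initState], by simp [stateAt, initState],
      by simp [stateAt, initState]⟩
  | k + 1 => by
    rw [stateAt, Function.iterate_succ_apply']
    exact (daInvariant_stateAt P k).step

def suitors (P : Profile n) (s : DAState n) (w : Fin n) : Finset (Fin n) :=
  {m | P.mrank m w < s.next m}

lemma sum_card_suitors {s : DAState n} (hI : DAInvariant P s) :
    ∑ w, #(P.suitors s w) = ∑ m, s.next m := by
  simp only [suitors, card_filter]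
  rw [sum_comm]
  refine sum_congr rfl fun m _ => ?_
  rw [← card_filter, card_filter_mrank_lt, min_eq_right (hI.next_le m)]

namespace DAInvariant

variable {s : DAState n}

lemma suitors_eq_singleton_of_mrank_eq (hI : DAInvariant P s) {wn mn : Fin n}
    (hwn : ∀ m, P.mrank m wn = n - 1) (hmn : s.held wn = some mn) :
    P.suitors s wn = {mn} := by
  ext m
  simp only [suitors, mem_filter, mem_univ, hwn m, true_and, mem_singleton]
  constructor
  · intro hlt
    have hnext : s.next m = n := le_antisymm (hI.next_le m) (by omega)
    have hm : m ∉ unmatched s := fun hu => (hI.next_lt_of_mem_unmatched hu).ne hnext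
    obtain ⟨w, hw⟩ := by simpa [mem_unmatched] using hm
    have hrank : P.mrank m w = P.mrank m wn := by
      have := hI.next_eq_of_held hw
      have := hwn m
      omega
    rw [mrank_inj.1 hrank, hmn] at hw
    exact (Option.some.inj hw).symm
  · rintro rfl
    rw [hI.next_eq_of_held hmn, hwn]
    omega

lemma held_eq_topW (hI : DAInvariant P s) {w : Fin n} (h : P.topW w ∈ P.suitors s w) :
    s.held w = some (P.topW w) := by
  obtain ⟨m, hm, hle⟩ := hI.held_le_of_proposed (mem_filter.1 h).2
  rw [wrank_eq_zero_iff.2 rfl, Nat.le_zero, wrank_eq_zero_iff] at hle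
  rwa [← hle]

/-- A man held by `w` has made exactly `mrank m w + 1` proposals; proposing to every woman
but `wn` takes `n - 1` of them. -/
lemma mrank_eq_sub_two (hI : DAInvariant P s) {m w wn : Fin n}
    (hwn : ∀ m, P.mrank m wn = n - 1) (hheld : s.held w = some m)
    (hm : m ∉ P.suitors s wn) (hall : ∀ w', w' ≠ wn → m ∈ P.suitors s w') :
    P.mrank m w = n - 2 := by
  have hnext := hI.next_eq_of_held hheld
  have hle : s.next m ≤ n - 1 := by simpa [suitors, hwn] using hm
  have hge : n - 1 ≤ s.next m :=
    sub_one_le_of_forall_ne_mrank_lt fun w' hw' => (mem_filter.1 (hall w' hw')).2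
  omega

end DAInvariant

lemma suitors_eq_univ_of_maxProp (h : P.MaxProp) {wn mn : Fin n}
    (hlast : P.suitors P.finalState wn = {mn}) :
    ∀ w, w ≠ wn → P.suitors P.finalState w = univ := by
  have hI : DAInvariant P P.finalState := P.daInvariant_stateAt _
  have htotal := (sum_card_suitors hI).trans h
  rw [← add_sum_erase _ _ (mem_univ wn), hlast, card_singleton] at htotal
  have hrest : ∑ w ∈ univ.erase wn, #(P.suitors P.finalState w) = ∑ _w ∈ univ.erase wn, n := by
    rw [sum_const, card_erase_of_mem (mem_univ wn), card_univ, Fintype.card_fin, smul_eq_mul,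
      Nat.sub_one_mul]
    have := Nat.le_mul_self n
    omega
  intro w hw
  rw [sum_eq_sum_iff_of_le fun w _ => (card_le_univ _).trans_eq (Fintype.card_fin n)] at hrest
  exact eq_univ_of_card _ ((hrest w (mem_erase.2 ⟨hw, mem_univ w⟩)).trans (Fintype.card_fin n).symm)

end Profile

/-- Under MaxProp, if `wn` is every man's last preference and the DA matches
`mn` to `wn`, then every other woman's top choice is a man `≠ mn` whose
penultimate preference is that woman. -/
theorem maxProp_top_and_penultimate (n : ℕ) (P : Profile n) (h : P.MaxProp)
    (wn : Fin n) (hwn : ∀ m w' : Fin n, w' ≠ wn → P.mPrefers m w' wn)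
    (mn : Fin n) (hmn : (P.finalState).held wn = some mn) :
    ∀ w : Fin n, w ≠ wn → P.topW w ≠ mn ∧ P.mrank (P.topW w) w = n - 2 := by
  intro w hw
  have hI : P.DAInvariant P.finalState := P.daInvariant_stateAt _
  have hrank : ∀ m, P.mrank m wn = n - 1 := fun m =>
    Profile.mrank_eq_sub_one_of_forall_mPrefers (hwn m)
  have hlast := hI.suitors_eq_singleton_of_mrank_eq hrank hmn
  have hfull := Profile.suitors_eq_univ_of_maxProp h hlast
  have hheld : P.finalState.held w = some (P.topW w) := hI.held_eq_topW (by simp [hfull w hw])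
  have htop : P.topW w ≠ mn := fun heq => hw (hI.held_injective (heq ▸ hheld) hmn)
  refine ⟨htop, hI.mrank_eq_sub_two hrank hheld (by simpa [hlast] using htop) ?_⟩
  intro w' hw'
  simp [hfull w' hw']
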